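/- Fix for each countable limit ordinal β ≠ 0 an ω-chain (β_n)_{n<ω} cofinal in β (i.e., β_n ≤ β_{n+1} < β for all n and sup_n β_n = β). For α ≤ ω₁ define S_α = { (n, δ) : n < ω, δ < α } ⊆ ω × ω₁, and define F : 𝒫(ω × ω₁) → 𝒫(ω × ω₁) by: (n, δ) ∈ F(X) iff either δ = 0, or δ = γ + 1 and (0, γ) ∈ X, or δ is a nonzero limit ordinal and (0, δ_m) ∈ X for all m ≥ n. Then F(S_α) = S_{α+1} for every countable ordinal α, and consequently F^α(∅) = S_α for every α ≤ ω₁. -/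

import Mathlib

open Set

universe u v

/-- Ordinal-indexed iterates of a map on a powerset, starting from ∅,
taking unions at limit stages. -/
noncomputable def iter {A : Type u} (f : Set A → Set A) (o : Ordinal.{v}) : Set A :=
  Ordinal.limitRecOn o ∅ (fun _ ih => f ih)
    (fun o _ ih => ⋃ (b : Ordinal.{v}) (h : b < o), ih b h)

/-- The least uncountable ordinal. -/
noncomputable def omega1 : Ordinal.{0} := (Cardinal.aleph 1).ord

/-- The set S_α = { (n, δ) : n < ω, δ < α } of the paper's model M_{ω₁}. -/
def Sset (α : Ordinal.{0}) : Set (ℕ × Ordinal.{0}) := {p | p.2 < α}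

/-- The semantic action of the formula (ν_z.◇_v x ∧ ◇_h z) ∨ □_v ⊥ on M_{ω₁},
where `c δ` enumerates the chosen cofinal ω-chain in the limit ordinal δ. -/
def Fop (c : Ordinal.{0} → ℕ → Ordinal.{0}) (X : Set (ℕ × Ordinal.{0})) :
    Set (ℕ × Ordinal.{0}) :=
  {p | p.2 < omega1 ∧ (p.2 = 0 ∨ (∃ γ, p.2 = γ + 1 ∧ (0, γ) ∈ X) ∨
    (Order.IsSuccLimit p.2 ∧ ∀ m ≥ p.1, (0, c p.2 m) ∈ X))}

/-!
`F` adds exactly one level to `S_α`: `γ + 1` enters when `γ` is present, and a limit `δ`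
enters (at any row `n`) iff a tail of its chain lies below `α`, which by monotonicity and
cofinality of the chain means `δ ≤ α`. Since `S` is continuous at limits, induction then
identifies the iterates `F^α(∅)` with `S_α`.
-/

section Iter

variable {A : Type u} (f : Set A → Set A)

@[simp]
theorem iter_zero : iter f (0 : Ordinal.{v}) = ∅ :=
  Ordinal.limitRecOn_zero ..

@[simp]
theorem iter_add_one (o : Ordinal.{v}) : iter f (o + 1) = f (iter f o) :=
  Ordinal.limitRecOn_add_one ..

theorem iter_limit {o : Ordinal.{v}} (ho : Order.IsSuccLimit o) :
    iter f o = ⋃ (b : Ordinal.{v}) (_ : b < o), iter f b :=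
  Ordinal.limitRecOn_limit _ _ _ _ ho

theorem iter_eq_of_add_one_of_limit (S : Ordinal.{v} → Set A) (bound : Ordinal.{v})
    (h0 : S 0 = ∅) (hsucc : ∀ β < bound, f (S β) = S (β + 1))
    (hlim : ∀ o, Order.IsSuccLimit o → S o = ⋃ (b : Ordinal.{v}) (_ : b < o), S b) :
    ∀ α ≤ bound, iter f α = S α := by
  intro α
  induction α using Ordinal.limitRecOn with
  | zero =>
    intro _
    rw [iter_zero, h0]
  | add_one β ih =>
    intro hβ
    rw [iter_add_one, ih ((lt_add_one β).le.trans hβ), hsucc β ((lt_add_one β).trans_le hβ)]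
  | limit o ho ih =>
    intro hob
    rw [iter_limit f ho, hlim o ho]
    exact iUnion₂_congr fun b hb => ih b hb (hb.le.trans hob)

end Iter

theorem le_of_cofinal_of_eventually_lt {ι : Type*} [LinearOrder ι] {δ a : ι}
    {s : ℕ → ι} (hs : Monotone s) (hcof : ∀ γ < δ, ∃ m, γ ≤ s m) {n : ℕ}
    (hlt : ∀ m ≥ n, s m < a) : δ ≤ a := by
  by_contra! haδ
  obtain ⟨m, hm⟩ := hcof a haδ
  exact (hm.trans (hs (le_max_left m n))).not_gt (hlt _ (le_max_right m n))

theorem Sset_zero : Sset 0 = ∅ := by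
  simp [Sset]

theorem Sset_eq_iUnion_of_isSuccLimit {α : Ordinal.{0}} (hα : Order.IsSuccLimit α) :
    Sset α = ⋃ (b : Ordinal.{0}) (_ : b < α), Sset b := by
  ext p
  simp only [Sset, mem_ofPred_eq, mem_iUnion, exists_prop]
  exact ⟨fun hp => ⟨p.2 + 1, hα.add_one_lt hp, lt_add_one p.2⟩,
    fun ⟨_, hb, hp⟩ => hp.trans hb⟩

section Step

variable (c : Ordinal.{0} → ℕ → Ordinal.{0})

theorem Fop_Sset_subset
    (hmono : ∀ δ, Order.IsSuccLimit δ → δ < omega1 → ∀ m, c δ m ≤ c δ (m + 1))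
    (hcof : ∀ δ, Order.IsSuccLimit δ → δ < omega1 → ∀ γ < δ, ∃ m, γ ≤ c δ m)
    (α : Ordinal.{0}) : Fop c (Sset α) ⊆ Sset (α + 1) := by
  rintro ⟨n, δ⟩ ⟨hδ1, rfl | ⟨γ, rfl, hγ⟩ | ⟨hδ, hall⟩⟩
  · exact Order.lt_add_one_iff.mpr (zero_le (a := α))
  · exact Order.lt_add_one_iff.mpr (Order.add_one_le_of_lt (show γ < α from hγ))
  · exact Order.lt_add_one_iff.mpr <| le_of_cofinal_of_eventually_lt
      (monotone_nat_of_le_succ (hmono δ hδ hδ1)) (hcof δ hδ hδ1) hall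

theorem Sset_add_one_subset_Fop
    (hlt : ∀ δ, Order.IsSuccLimit δ → δ < omega1 → ∀ m, c δ m < δ)
    {α : Ordinal.{0}} (hα : α < omega1) : Sset (α + 1) ⊆ Fop c (Sset α) := by
  rintro ⟨n, δ⟩ hδ
  have hδα : δ ≤ α := Order.lt_add_one_iff.mp hδ
  have hδ1 : δ < omega1 := hδα.trans_lt hα
  refine ⟨hδ1, ?_⟩
  rcases Ordinal.zero_or_succ_or_isSuccLimit δ with h0 | ⟨γ, rfl⟩ | hδ_lim
  · exact Or.inl h0
  · exact Or.inr <| Or.inl ⟨γ, Order.succ_eq_add_one γ, Order.succ_le_iff.mp hδα⟩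
  · exact Or.inr <| Or.inr ⟨hδ_lim, fun m _ => (hlt δ hδ_lim hδ1 m).trans_le hδα⟩

end Step

theorem stmt14 (c : Ordinal.{0} → ℕ → Ordinal.{0})
    (hmono : ∀ δ, Order.IsSuccLimit δ → δ < omega1 → ∀ m, c δ m ≤ c δ (m + 1))
    (hlt : ∀ δ, Order.IsSuccLimit δ → δ < omega1 → ∀ m, c δ m < δ)
    (hcof : ∀ δ, Order.IsSuccLimit δ → δ < omega1 → ∀ γ < δ, ∃ m, γ ≤ c δ m) :
    (∀ α < omega1, Fop c (Sset α) = Sset (α + 1)) ∧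
      (∀ α ≤ omega1, iter (Fop c) α = Sset α) := by
  have hstep : ∀ α < omega1, Fop c (Sset α) = Sset (α + 1) := fun α hα =>
    (Fop_Sset_subset c hmono hcof α).antisymm (Sset_add_one_subset_Fop c hlt hα)
  exact ⟨hstep, iter_eq_of_add_one_of_limit _ Sset omega1 Sset_zero hstep
    fun _ => Sset_eq_iUnion_of_isSuccLimit⟩
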